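/- Let A > 0 and p ∈ (1,2). Let ψ : [0,A] → [0,∞) be continuous, twice continuously differentiable on (0,A), strictly increasing with ψ′ increasing on (0,A), and suppose there is C > 1 with (1/C)·x^p ≤ ψ(x) ≤ C·x^p for all x ∈ [0,A]. Write ℛ := { z ∈ ℂ : 0 < Re z < A and |Im z| < ψ(Re z) }, α := 1/(p−1), and let ψ⁻¹ : [0, ψ(A)] → [0,A] denote the inverse of ψ. Then there exist a constant B ∈ (0,A), constants a, h > 0, and a compact set K ⊆ ℂ intersecting { z : Re z = A } and with K ∖ { z : Re z = A } ⊆ ℛ, such that for every x + iy ∈ ℛ with x ≤ B: (1) for every q ∈ 𝒬^{α,a,h}, the point ψ⁻¹(|y|) + iy + q belongs to ℛ; (2) ψ⁻¹(|y|) + o_{α,a,h} > x; (3) ψ⁻¹(|y|) + iy + o_{α,a,h} ∈ K; and (4) dist( x+iy, ℂ ∖ ℛ ) ≤ | ψ⁻¹(|y|) − x |. -/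

import Mathlib

set_option maxHeartbeats 1000000


/-- The half-strip `S_{a,h} = { z ∈ ℂ : Re z > a, −h < Im z < h }`. -/
def halfStrip (a h : ℝ) : Set ℂ := {z : ℂ | a < z.re ∧ -h < z.im ∧ z.im < h}

/-- The region `T_{a,h} = { 1/z : z ∈ S_{a,h} }`. -/
def Tregion (a h : ℝ) : Set ℂ := (fun z : ℂ => z⁻¹) '' halfStrip a h

/-- The comparison domain `𝒬^{α,a,h} = { z^α : z ∈ T_{a,h} }` (principal branch). -/
noncomputable def Qregion (α a h : ℝ) : Set ℂ := (fun z : ℂ => z ^ (α : ℂ)) '' Tregion a h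

/-- The base point `o_{α,a,h} = ((2h/π)·log(1+√2) + a)^{−α}` of display (6.3) of the paper. -/
noncomputable def basePt (α a h : ℝ) : ℝ :=
  ((2 * h / Real.pi) * Real.log (1 + Real.sqrt 2) + a) ^ (-α)

/-- The planar cusp region `ℛ = { z : 0 < Re z < A, |Im z| < ψ(Re z) }`. -/
def cuspRegion (A : ℝ) (ψ : ℝ → ℝ) : Set ℂ :=
  {z : ℂ | 0 < z.re ∧ z.re < A ∧ |z.im| < ψ z.re}


lemma superadd {A : ℝ} {ψ : ℝ → ℝ} (hconv : ConvexOn ℝ (Set.Icc 0 A) ψ) (h0 : ψ 0 = 0)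
    {s t : ℝ} (hs : 0 ≤ s) (ht : 0 ≤ t) (hst : s + t ≤ A) : ψ s + ψ t ≤ ψ (s + t) := by
  have hstpos : 0 ≤ s + t := by linarith
  rcases eq_or_lt_of_le hstpos with he | hpos
  · have hs0 : s = 0 := by linarith
    have ht0 : t = 0 := by linarith
    have he' : s + t = 0 := he.symm
    rw [he', hs0, ht0, h0]; norm_num
  · set μ := s / (s + t) with hμ
    set ν := t / (s + t) with hν
    have hμ0 : 0 ≤ μ := div_nonneg hs hstpos
    have hν0 : 0 ≤ ν := div_nonneg ht hstpos
    have hne : s + t ≠ 0 := ne_of_gt hpos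
    have hμν : μ + ν = 1 := by rw [hμ, hν]; field_simp
    have hmem : s + t ∈ Set.Icc (0:ℝ) A := ⟨hstpos, hst⟩
    have h0mem : (0:ℝ) ∈ Set.Icc (0:ℝ) A := ⟨le_refl _, by linarith⟩
    have h1 : ψ s ≤ μ * ψ (s + t) + ν * ψ 0 := by
      have e1 : μ • (s + t) + ν • (0:ℝ) = s := by
        simp only [smul_eq_mul, mul_zero, add_zero, hμ]
        field_simp
      have := hconv.2 hmem h0mem hμ0 hν0 hμν
      rw [e1] at this
      simpa [smul_eq_mul] using this
    have h2 : ψ t ≤ ν * ψ (s + t) + μ * ψ 0 := by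
      have e2 : ν • (s + t) + μ • (0:ℝ) = t := by
        simp only [smul_eq_mul, mul_zero, add_zero, hν]
        field_simp
      have := hconv.2 hmem h0mem hν0 hμ0 (by linarith)
      rw [e2] at this
      simpa [smul_eq_mul] using this
    have : ψ s + ψ t ≤ (μ + ν) * ψ (s + t) + (μ + ν) * ψ 0 := by ring_nf; ring_nf at h1 h2; linarith
    rw [hμν] at this
    simpa [h0] using this

lemma qregion_bound {p C a : ℝ} (hp1 : 1 < p) (hp2 : p < 2) (hC : 1 < C) (ha : 1 ≤ a)
    {q : ℂ} (hq : q ∈ Qregion (1/(p-1)) a ((p-1)/(16*C))) :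
    0 < q.re ∧ q.re < a ^ (-(1/(p-1))) ∧ |q.im| ≤ 1/(2*C) * q.re ^ p := by
  obtain ⟨w, ⟨z, hz, rfl⟩, rfl⟩ := hq
  obtain ⟨α, hαdef⟩ : ∃ α : ℝ, α = 1/(p-1) := ⟨_, rfl⟩
  obtain ⟨h, hhdef⟩ : ∃ h : ℝ, h = (p-1)/(16*C) := ⟨_, rfl⟩
  beta_reduce
  rw [← hαdef]
  rw [← hhdef] at hz
  have hp1' : (0:ℝ) < p - 1 := by linarith
  have hα1 : 1 < α := by rw [hαdef, lt_div_iff₀ hp1']; linarith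
  have hαpos : 0 < α := by linarith
  have hC0 : (0:ℝ) < C := by linarith
  have hh0 : 0 < h := by rw [hhdef]; positivity
  have hh1 : h ≤ 1 := by
    rw [hhdef, div_le_one (by positivity)]; nlinarith
  have hαh : α * h = 1/(16*C) := by rw [hαdef, hhdef]; field_simp
  have hzre : a < z.re := hz.1
  have hzim : |z.im| < h := abs_lt.2 ⟨hz.2.1, hz.2.2⟩
  have hzre0 : 0 < z.re := lt_of_lt_of_le (by linarith) hzre.le
  have hz0 : z ≠ 0 := by
    intro hzz; rw [hzz] at hzre0; simp at hzre0
  have habs : a < ‖z‖ := lt_of_lt_of_le hzre (Complex.re_le_norm z)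
  have habs0 : (0:ℝ) < ‖z‖ := by linarith
  obtain ⟨r, hrdef⟩ : ∃ r : ℝ, r = (‖z‖)⁻¹ := ⟨_, rfl⟩
  have hw0 : z⁻¹ ≠ 0 := inv_ne_zero hz0
  have hr : ‖z⁻¹‖ = r := by rw [norm_inv, hrdef]
  have hr0 : 0 < r := by rw [hrdef]; exact inv_pos.2 habs0
  have hra : r < a⁻¹ := by
    rw [hrdef]; exact inv_strictAnti₀ (by linarith) habs
  have hr1 : r ≤ 1 := by
    have h1 : a⁻¹ ≤ 1 := by rw [inv_le_one_iff₀]; right; exact ha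
    linarith
  have hwre : 0 < (z⁻¹).re := by
    rw [Complex.inv_re]
    exact div_pos hzre0 (Complex.normSq_pos.2 hz0)
  obtain ⟨θ, hθdef⟩ : ∃ θ : ℝ, θ = Complex.arg z⁻¹ := ⟨_, rfl⟩
  have hθhalf : |θ| ≤ Real.pi / 2 := by
    rw [hθdef]; exact Complex.abs_arg_le_pi_div_two_iff.2 hwre.le
  have hsinθ : |Real.sin θ| = |z.im| / ‖z‖ := by
    rw [hθdef, Complex.sin_arg, Complex.inv_im, hr, hrdef]
    rw [abs_div, abs_div]
    rw [abs_of_pos (inv_pos.2 habs0)]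
    rw [abs_neg, abs_of_pos (Complex.normSq_pos.2 hz0)]
    rw [Complex.normSq_eq_norm_sq]
    field_simp
  have hjordan : |θ| ≤ Real.pi / 2 * |Real.sin θ| := by
    have h1 : 2 / Real.pi * |θ| ≤ Real.sin |θ| := Real.mul_le_sin (abs_nonneg θ) hθhalf
    have h2 : Real.sin |θ| = |Real.sin θ| := by
      rcases abs_cases θ with ⟨e, hpos⟩ | ⟨e, hneg⟩
      · rw [e, abs_of_nonneg]
        exact Real.sin_nonneg_of_nonneg_of_le_pi hpos
          (by rw [← e]; linarith [hθhalf, Real.pi_pos])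
      · have hsle : Real.sin θ ≤ 0 := by
          apply Real.sin_nonpos_of_nonpos_of_neg_pi_le hneg.le
          have : -θ ≤ Real.pi / 2 := by rw [← e]; exact hθhalf
          linarith [Real.pi_pos]
        rw [e, Real.sin_neg, abs_of_nonpos hsle]
    rw [h2] at h1
    have hπ := Real.pi_pos
    calc |θ| = Real.pi / 2 * (2 / Real.pi * |θ|) := by field_simp
    _ ≤ Real.pi / 2 * |Real.sin θ| := by
        apply mul_le_mul_of_nonneg_left h1 (by positivity)
  have hθbound : |θ| ≤ 2 * h * r := by
    have h1 : |Real.sin θ| ≤ h * r := by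
      rw [hsinθ, div_le_iff₀ habs0]
      calc |z.im| ≤ h := hzim.le
      _ = h * 1 := by ring
      _ ≤ h * (r * ‖z‖) := by
          apply mul_le_mul_of_nonneg_left _ hh0.le
          rw [hrdef, inv_mul_cancel₀ (ne_of_gt habs0)]
      _ = h * r * ‖z‖ := by ring
    have hπ4 : Real.pi ≤ 4 := Real.pi_le_four
    calc |θ| ≤ Real.pi / 2 * |Real.sin θ| := hjordan
    _ ≤ Real.pi / 2 * (h * r) := by
        apply mul_le_mul_of_nonneg_left h1 (by positivity)
    _ ≤ 2 * (h * r) := by nlinarith [mul_nonneg hh0.le hr0.le]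
    _ = 2 * h * r := by ring
  have hβ : |θ * α| ≤ r / (8 * C) := by
    rw [abs_mul, abs_of_pos hαpos]
    calc |θ| * α ≤ 2 * h * r * α := by
          apply mul_le_mul_of_nonneg_right hθbound hαpos.le
    _ = 2 * r * (α * h) := by ring
    _ = 2 * r * (1/(16*C)) := by rw [hαh]
    _ = r / (8 * C) := by ring
  have hβ1 : |θ * α| ≤ 1 := by
    have h1 : r / (8*C) ≤ 1 := by
      rw [div_le_one (by positivity)]; nlinarith
    linarith [hβ]
  -- re and im of the power
  have hq_eq : z⁻¹ ^ ((α:ℝ):ℂ) = Complex.exp (Complex.log z⁻¹ * (α:ℝ)) :=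
    Complex.cpow_def_of_ne_zero hw0 _
  have hlre : (Complex.log z⁻¹ * (α:ℝ)).re = Real.log r * α := by
    simp [Complex.mul_re, Complex.log_re, Complex.log_im, hr]
  have hlim : (Complex.log z⁻¹ * (α:ℝ)).im = θ * α := by
    simp [Complex.mul_im, Complex.log_re, Complex.log_im, hθdef]
  obtain ⟨ρ, hρdef⟩ : ∃ ρ : ℝ, ρ = r ^ α := ⟨_, rfl⟩
  have hρpos : 0 < ρ := by rw [hρdef]; exact Real.rpow_pos_of_pos hr0 α
  have hexp : Real.exp (Real.log r * α) = ρ := by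
    rw [hρdef, Real.rpow_def_of_pos hr0]
  have hqre : (z⁻¹ ^ ((α:ℝ):ℂ)).re = ρ * Real.cos (θ * α) := by
    rw [hq_eq, Complex.exp_re, hlre, hlim, hexp]
  have hqim : (z⁻¹ ^ ((α:ℝ):ℂ)).im = ρ * Real.sin (θ * α) := by
    rw [hq_eq, Complex.exp_im, hlre, hlim, hexp]
  have hcos1 : Real.cos (θ * α) ≤ 1 := Real.cos_le_one _
  have hcos : 1/2 ≤ Real.cos (θ * α) := by
    have h1 : (θ * α)^2 ≤ 1 := by
      have h2 := sq_abs (θ * α)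
      nlinarith [abs_nonneg (θ * α)]
    nlinarith [Real.one_sub_sq_div_two_le_cos (x := θ * α)]
  have hρa : ρ < a ^ (-α) := by
    have h1 : ρ < (a⁻¹) ^ α := by
      rw [hρdef]; exact Real.rpow_lt_rpow hr0.le hra hαpos
    rwa [Real.inv_rpow (by linarith : (0:ℝ) ≤ a), ← Real.rpow_neg (by linarith : (0:ℝ) ≤ a)] at h1
  have hsin : |Real.sin (θ * α)| ≤ r / (8 * C) :=
    le_trans (Real.abs_sin_le_abs) hβ
  have hrρ : ρ ^ (p - 1) = r := by
    rw [hρdef, ← Real.rpow_mul hr0.le]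
    have he : α * (p - 1) = 1 := by rw [hαdef]; field_simp
    rw [he, Real.rpow_one]
  have hρp : ρ * r = ρ ^ p := by
    have he : ρ ^ p = ρ ^ (1 + (p-1)) := by norm_num
    rw [he, Real.rpow_add hρpos, Real.rpow_one, hrρ]
  have hqrepos : 0 < ρ * Real.cos (θ * α) := by nlinarith
  have hρ2 : ρ ≤ 2 * (ρ * Real.cos (θ * α)) := by nlinarith
  refine ⟨?_, ?_, ?_⟩
  · rw [hqre]; exact hqrepos
  · rw [hqre]
    calc ρ * Real.cos (θ * α) ≤ ρ * 1 := by nlinarith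
    _ = ρ := by ring
    _ < a ^ (-α) := hρa
  · rw [hqre, hqim]
    have him1 : |ρ * Real.sin (θ * α)| ≤ ρ * (r / (8*C)) := by
      rw [abs_mul, abs_of_pos hρpos]
      exact mul_le_mul_of_nonneg_left hsin hρpos.le
    have h4 : ρ ^ p ≤ 4 * (ρ * Real.cos (θ * α)) ^ p := by
      calc ρ ^ p ≤ (2 * (ρ * Real.cos (θ * α))) ^ p :=
            Real.rpow_le_rpow hρpos.le hρ2 (by linarith)
      _ = 2 ^ p * (ρ * Real.cos (θ * α)) ^ p :=
            Real.mul_rpow (by norm_num) hqrepos.le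
      _ ≤ 4 * (ρ * Real.cos (θ * α)) ^ p := by
            apply mul_le_mul_of_nonneg_right _ (Real.rpow_nonneg hqrepos.le p)
            calc (2:ℝ) ^ p ≤ 2 ^ (2:ℝ) := Real.rpow_le_rpow_of_exponent_le one_le_two hp2.le
            _ = 4 := by
                rw [show ((2:ℝ):ℝ) = ((2:ℕ):ℝ) by norm_num, Real.rpow_natCast]; norm_num
    calc |ρ * Real.sin (θ * α)| ≤ ρ * (r / (8*C)) := him1
    _ = (ρ * r) / (8 * C) := by ring
    _ = ρ ^ p / (8 * C) := by rw [hρp]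
    _ ≤ (4 * (ρ * Real.cos (θ * α)) ^ p) / (8 * C) := by
        exact div_le_div_of_nonneg_right h4 (by positivity)
    _ = 1/(2*C) * (ρ * Real.cos (θ * α)) ^ p := by ring

/-- Lemma 6.2 of the paper. Let `A > 0`, `p ∈ (1,2)`, and let
`ψ : [0,A] → [0,∞)` be continuous, `C²` on `(0,A)`, strictly increasing with increasing
derivative, and comparable to `x^p`. With `α = 1/(p−1)` and `φ = ψ⁻¹`, there exist
`B ∈ (0,A)`, `a, h > 0` and a compact set `K` intersecting `{Re z = A}` with
`K ∖ {Re z = A} ⊆ ℛ` such that for every `x + iy ∈ ℛ` with `x ≤ B`: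
(1) `ψ⁻¹(|y|) + iy + 𝒬^{α,a,h} ⊆ ℛ`; (2) `ψ⁻¹(|y|) + o_{α,a,h} > x`;
(3) `ψ⁻¹(|y|) + iy + o_{α,a,h} ∈ K`; (4) `dist(x+iy, ℂ ∖ ℛ) ≤ |ψ⁻¹(|y|) − x|`. -/
theorem planar_cusp_embedding (A p C : ℝ) (hA : 0 < A) (hp : p ∈ Set.Ioo (1 : ℝ) 2)
    (hC : 1 < C) (ψ φ : ℝ → ℝ)
    (hψcont : ContinuousOn ψ (Set.Icc 0 A))
    (hψC2 : ContDiffOn ℝ 2 ψ (Set.Ioo 0 A))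
    (hψmono : StrictMonoOn ψ (Set.Icc 0 A))
    (hψ'mono : MonotoneOn (deriv ψ) (Set.Ioo 0 A))
    (hψbound : ∀ x ∈ Set.Icc (0 : ℝ) A, (1 / C) * x ^ p ≤ ψ x ∧ ψ x ≤ C * x ^ p)
    (hφ : ∀ x ∈ Set.Icc (0 : ℝ) A, φ (ψ x) = x) :
    ∃ B ∈ Set.Ioo (0 : ℝ) A, ∃ a > (0 : ℝ), ∃ h > (0 : ℝ), ∃ K : Set ℂ,
      IsCompact K ∧ (K ∩ {z : ℂ | z.re = A}).Nonempty ∧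
      K \ {z : ℂ | z.re = A} ⊆ cuspRegion A ψ ∧
      ∀ z ∈ cuspRegion A ψ, z.re ≤ B →
        (∀ q ∈ Qregion (1 / (p - 1)) a h,
          ((φ |z.im| : ℝ) : ℂ) + (z.im : ℂ) * Complex.I + q ∈ cuspRegion A ψ) ∧
        z.re < φ |z.im| + basePt (1 / (p - 1)) a h ∧
        ((φ |z.im| : ℝ) : ℂ) + (z.im : ℂ) * Complex.I
            + ((basePt (1 / (p - 1)) a h : ℝ) : ℂ) ∈ K ∧
        Metric.infDist z (cuspRegion A ψ)ᶜ ≤ |φ |z.im| - z.re| := by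
  obtain ⟨hp1, hp2⟩ := hp
  have hp1' : (0:ℝ) < p - 1 := by linarith
  have hC0 : (0:ℝ) < C := by linarith
  have hαpos : 0 < 1/(p-1) := by positivity
  -- basic facts about ψ
  have hψ0 : ψ 0 = 0 := by
    obtain ⟨l, u⟩ := hψbound 0 ⟨le_refl _, hA.le⟩
    rw [Real.zero_rpow (by linarith : p ≠ 0)] at l u
    simp at l u; linarith
  have hψnonneg : ∀ x ∈ Set.Icc (0:ℝ) A, 0 ≤ ψ x := by
    intro x hx
    have := (hψbound x hx).1
    have h2 : 0 ≤ (1/C) * x ^ p := mul_nonneg (by positivity) (Real.rpow_nonneg hx.1 p)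
    linarith
  have hconv : ConvexOn ℝ (Set.Icc 0 A) ψ := by
    apply MonotoneOn.convexOn_of_deriv (convex_Icc 0 A) hψcont
    · rw [interior_Icc]
      exact hψC2.differentiableOn (by norm_num)
    · rw [interior_Icc]; exact hψ'mono
  -- choose the constants
  set a : ℝ := max 1 ((2/A) ^ (p-1)) + 1 with hadef
  have ha1 : 1 ≤ a := by
    have := le_max_left (1:ℝ) ((2/A) ^ (p-1)); rw [hadef]; linarith
  have ha0 : 0 < a := by linarith
  have ha_big : (2/A)^(p-1) < a := by
    have := le_max_right (1:ℝ) ((2/A) ^ (p-1)); rw [hadef]; linarith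
  have haA : a ^ (-(1/(p-1))) < A / 2 := by
    have h2A : (0:ℝ) < 2/A := by positivity
    have h1 : ((2/A)^(p-1)) ^ (1/(p-1)) < a ^ (1/(p-1)) :=
      Real.rpow_lt_rpow (Real.rpow_nonneg h2A.le _) ha_big hαpos
    rw [← Real.rpow_mul h2A.le] at h1
    have he : (p-1) * (1/(p-1)) = 1 := by field_simp
    rw [he, Real.rpow_one] at h1
    have h3 : a ^ (-(1/(p-1))) = (a ^ (1/(p-1)))⁻¹ := Real.rpow_neg ha0.le _
    rw [h3]
    have h4 : (a ^ (1/(p-1)))⁻¹ < (2/A)⁻¹ := inv_strictAnti₀ h2A h1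
    rw [inv_div] at h4
    linarith
  set h : ℝ := (p-1)/(16*C) with hhdef
  have hh0 : 0 < h := by positivity
  set o : ℝ := basePt (1/(p-1)) a h with hodef
  have hbase_pos : 0 < (2 * h / Real.pi) * Real.log (1 + Real.sqrt 2) + a := by
    have h1 : 0 < Real.log (1 + Real.sqrt 2) := Real.log_pos (by
      have : 0 < Real.sqrt 2 := Real.sqrt_pos.2 (by norm_num)
      linarith)
    have h2 : 0 < 2 * h / Real.pi := by positivity
    exact add_pos (mul_pos h2 h1) ha0
  have ho_pos : 0 < o := by
    rw [hodef, basePt]; exact Real.rpow_pos_of_pos hbase_pos _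
  have ho_lt : o < a ^ (-(1/(p-1))) := by
    rw [hodef, basePt]
    have hlt : a < (2 * h / Real.pi) * Real.log (1 + Real.sqrt 2) + a := by
      have h1 : 0 < Real.log (1 + Real.sqrt 2) := Real.log_pos (by
        have : 0 < Real.sqrt 2 := Real.sqrt_pos.2 (by norm_num)
        linarith)
      have h2 : 0 < 2 * h / Real.pi := by positivity
      nlinarith
    have h1 : a ^ (1/(p-1)) < ((2 * h / Real.pi) * Real.log (1 + Real.sqrt 2) + a) ^ (1/(p-1)) :=
      Real.rpow_lt_rpow ha0.le hlt hαpos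
    rw [Real.rpow_neg ha0.le, Real.rpow_neg hbase_pos.le]
    exact inv_strictAnti₀ (Real.rpow_pos_of_pos ha0 _) h1
  set B : ℝ := min (A/2) (o/2) with hBdef
  have hB0 : 0 < B := lt_min (half_pos hA) (half_pos ho_pos)
  have hBA2 : B ≤ A/2 := min_le_left _ _
  have hBo2 : B ≤ o/2 := min_le_right _ _
  have hBA : B < A := lt_of_le_of_lt hBA2 (by linarith)
  -- the compact set K
  set f₁ : ℝ → ℂ := fun s => ((s + o : ℝ) : ℂ) + ((ψ s : ℝ) : ℂ) * Complex.I with hf₁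
  set f₂ : ℝ → ℂ := fun s => ((s + o : ℝ) : ℂ) - ((ψ s : ℝ) : ℂ) * Complex.I with hf₂
  set K : Set ℂ := f₁ '' Set.Icc 0 B ∪ f₂ '' Set.Icc 0 B ∪ {(A : ℂ)} with hKdef
  have hIccsub : Set.Icc (0:ℝ) B ⊆ Set.Icc 0 A := Set.Icc_subset_Icc le_rfl hBA.le
  have hcψB : ContinuousOn ψ (Set.Icc 0 B) := hψcont.mono hIccsub
  have hcont1 : ContinuousOn f₁ (Set.Icc 0 B) := by
    apply ContinuousOn.add
    · exact (Complex.continuous_ofReal.comp (continuous_id.add continuous_const)).continuousOn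
    · exact (Complex.continuous_ofReal.comp_continuousOn hcψB).mul continuousOn_const
  have hcont2 : ContinuousOn f₂ (Set.Icc 0 B) := by
    apply ContinuousOn.sub
    · exact (Complex.continuous_ofReal.comp (continuous_id.add continuous_const)).continuousOn
    · exact (Complex.continuous_ofReal.comp_continuousOn hcψB).mul continuousOn_const
  have hKcompact : IsCompact K := by
    apply IsCompact.union
    apply IsCompact.union
    · exact isCompact_Icc.image_of_continuousOn hcont1
    · exact isCompact_Icc.image_of_continuousOn hcont2
    · exact isCompact_singleton
  have hKsub : ∀ s ∈ Set.Icc (0:ℝ) B, ∀ ε : ℝ, |ε| = 1 →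
      ((s + o : ℝ) : ℂ) + ((ε * ψ s : ℝ) : ℂ) * Complex.I ∈ cuspRegion A ψ := by
    intro s hs ε hε
    have hs0 : 0 ≤ s := hs.1
    have hsB : s ≤ B := hs.2
    have hsoA : s + o < A := by
      have : o < A/2 := lt_trans ho_lt haA
      linarith
    have hsA : s ∈ Set.Icc (0:ℝ) A := ⟨hs0, by linarith⟩
    have hsoA' : s + o ∈ Set.Icc (0:ℝ) A := ⟨by linarith, hsoA.le⟩
    refine ⟨?_, ?_, ?_⟩ <;>
      simp only [Complex.add_re, Complex.add_im, Complex.ofReal_re, Complex.ofReal_im,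
        Complex.mul_re, Complex.mul_im, Complex.I_re, Complex.I_im, mul_zero, mul_one,
        zero_mul, sub_zero, zero_sub, zero_add, add_zero, neg_neg, neg_zero]
    · linarith
    · exact hsoA
    · have h1 : |ε * ψ s| = ψ s := by
        rw [abs_mul, hε, one_mul, abs_of_nonneg (hψnonneg s hsA)]
      rw [h1]
      exact hψmono hsA hsoA' (by linarith)
  refine ⟨B, ⟨hB0, hBA⟩, a, ha0, h, hh0, K, hKcompact, ?_, ?_, ?_⟩
  · exact ⟨(A:ℂ), Or.inr rfl, by simp⟩
  · rintro w ⟨hwK, hwA⟩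
    rcases hwK with (⟨s, hs, rfl⟩ | ⟨s, hs, rfl⟩) | hw
    · have := hKsub s hs 1 (by norm_num)
      simpa [hf₁] using this
    · have := hKsub s hs (-1) (by norm_num)
      have he : ((-1 * ψ s : ℝ) : ℂ) * Complex.I = -(((ψ s : ℝ):ℂ) * Complex.I) := by
        push_cast; ring
      rw [he] at this
      simpa [hf₂, sub_eq_add_neg] using this
    · exact absurd (by simpa using hw ▸ Complex.ofReal_re A) hwA
  · intro z hz hzB
    obtain ⟨hzre0, hzreA, hzim⟩ := hz
    -- find s with ψ s = |z.im|
    have hxA : z.re ∈ Set.Icc (0:ℝ) A := ⟨hzre0.le, hzreA.le⟩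
    have hivt : Set.Icc (ψ 0) (ψ z.re) ⊆ ψ '' Set.Icc 0 z.re :=
      intermediate_value_Icc hzre0.le (hψcont.mono (Set.Icc_subset_Icc le_rfl hzreA.le))
    obtain ⟨s, hsmem, hψs⟩ := hivt ⟨by rw [hψ0]; exact abs_nonneg _, hzim.le⟩
    have hs0 : 0 ≤ s := hsmem.1
    have hsx2 : s ≤ z.re := hsmem.2
    have hsx : s < z.re := by
      rcases eq_or_lt_of_le hsx2 with he | hlt
      · exfalso; rw [he] at hψs; rw [hψs] at hzim; exact lt_irrefl _ hzim
      · exact hlt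
    have hsA : s ∈ Set.Icc (0:ℝ) A := ⟨hs0, by linarith⟩
    have hφs : φ |z.im| = s := by rw [← hψs, hφ s hsA]
    have hsB : s ≤ B := by linarith
    refine ⟨?_, ?_, ?_, ?_⟩
    · -- (1) translated Q is in the region
      intro q hq
      obtain ⟨hq1, hq2, hq3⟩ := qregion_bound hp1 hp2 hC ha1 (by rw [hhdef] at hq; exact hq)
      rw [hφs]
      have htA2 : q.re < A/2 := lt_trans hq2 haA
      have htA : q.re ≤ A := by linarith
      have hψt : (1/C) * q.re ^ p ≤ ψ q.re := (hψbound q.re ⟨hq1.le, htA⟩).1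
      have htp : 0 < q.re ^ p := Real.rpow_pos_of_pos hq1 p
      have him : |q.im| < ψ q.re := by
        have h1 : 1/(2*C) * q.re ^ p < 1/C * q.re ^ p := by
          apply mul_lt_mul_of_pos_right _ htp
          rw [div_lt_div_iff₀ (by linarith) (by linarith)]
          nlinarith
        linarith [hq3]
      have hsum : ψ s + ψ q.re ≤ ψ (s + q.re) :=
        superadd hconv hψ0 hs0 hq1.le (by linarith)
      refine ⟨?_, ?_, ?_⟩ <;>
        simp only [Complex.add_re, Complex.add_im, Complex.ofReal_re, Complex.ofReal_im,
          Complex.mul_re, Complex.mul_im, Complex.I_re, Complex.I_im, mul_zero, mul_one,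
          zero_mul, sub_zero, zero_sub, zero_add, add_zero, neg_neg, neg_zero]
      · linarith
      · linarith
      · calc |z.im + q.im| ≤ |z.im| + |q.im| := abs_add_le _ _
        _ < ψ s + ψ q.re := by rw [← hψs]; linarith
        _ ≤ ψ (s + q.re) := hsum
    · -- (2)
      rw [hφs, ← hodef]
      have : z.re ≤ o/2 := le_trans hzB hBo2
      linarith
    · -- (3)
      rw [hφs, ← hodef]
      rcases le_or_gt 0 z.im with hy | hy
      · left; left
        refine ⟨s, ⟨hs0, hsB⟩, ?_⟩
        have he : ψ s = z.im := by rw [hψs, abs_of_nonneg hy]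
        simp only [hf₁, he]
        push_cast; ring
      · left; right
        refine ⟨s, ⟨hs0, hsB⟩, ?_⟩
        have he : ψ s = -z.im := by rw [hψs, abs_of_neg hy]
        simp only [hf₂, he]
        push_cast; ring
    · -- (4)
      rw [hφs]
      have hmem : ((s:ℝ):ℂ) + ((z.im : ℝ):ℂ) * Complex.I ∈ (cuspRegion A ψ)ᶜ := by
        intro hmem
        obtain ⟨_, _, h3⟩ := hmem
        have hre : (((s:ℝ):ℂ) + ((z.im : ℝ):ℂ) * Complex.I).re = s := by
          simp
        have him : (((s:ℝ):ℂ) + ((z.im : ℝ):ℂ) * Complex.I).im = z.im := by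
          simp
        rw [hre, him, hψs] at h3
        exact lt_irrefl _ h3
      have h1 := Metric.infDist_le_dist_of_mem (x := z) hmem
      have h2 : dist z (((s:ℝ):ℂ) + ((z.im : ℝ):ℂ) * Complex.I) = |z.re - s| := by
        rw [Complex.dist_eq]
        have he : z - (((s:ℝ):ℂ) + ((z.im : ℝ):ℂ) * Complex.I) = ((z.re - s : ℝ) : ℂ) := by
          apply Complex.ext <;> simp
        rw [he, Complex.norm_real, Real.norm_eq_abs]
      rw [h2] at h1
      rwa [abs_sub_comm] at h1
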